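/- If α and β are permutations of a finite set X with |X| = m such that ⟨α, β⟩ is transitive, and sign(α)·sign(β)·sign((αβ)⁻¹) = 1 (which always holds), then m + 2 − (|α| + |β| + |(αβ)⁻¹|) is a nonnegative even integer. -/

import Mathlib

/-- The number of cycles of a permutation `σ` on a finite set, fixed points
included as trivial cycles (= number of orbits of the group generated by `σ`). -/
def cycleCount {X : Type*} [Fintype X] [DecidableEq X] (σ : Equiv.Perm X) : ℕ :=
  (Fintype.card X - σ.cycleType.sum) + σ.cycleType.card

/-!
Write `|σ|` for the number of cycles of `σ` and `k` for the number of orbits of `⟨α, β⟩`, the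
classes of `SameCycle.setoid α ⊔ SameCycle.setoid β`.
The inequality `|α| + |β| + |αβ| ≤ m + 2k` is proved by induction on `β`, written as
`swap x y * β'` with `x`, `y` in different cycles of `β'`, so that `|β| = |β'| - 1` and
`αβ = swap (α x) (α y) * αβ'`. If `x` and `y` lie in one orbit of `⟨α, β'⟩`, then `k` is unchanged
and `|αβ| ≤ |αβ'| + 1`; otherwise `α x` and `α y` lie in different cycles of `αβ'`, and `k`, `|β|`
and `|αβ|` all drop by one.

That a transposition changes the number of cycles by exactly one, joining two cycles exactly when
its points lie in different ones, is seen by counting classes: `⟨σ, swap x y⟩` and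
`⟨swap x y * σ, swap x y⟩` have the same orbits, gluing two points of a finite set removes at most
one class, and `sign σ = (-1) ^ (m + |σ|)` forces `|σ| ≠ |swap x y * σ|`. The same sign formula
turns the hypothesis on the signs into the parity statement.
-/

open Function Equiv Equiv.Perm

namespace Setoid

variable {α : Type*} {r s : Setoid α}

theorem map_of_le_surjective (h : r ≤ s) : Surjective (map_of_le h) :=
  fun q => q.inductionOn fun x => ⟨Quotient.mk r x, rfl⟩

variable [Finite α]

theorem card_quotient_le_of_le (h : r ≤ s) : Nat.card (Quotient s) ≤ Nat.card (Quotient r) :=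
  Nat.card_le_card_of_surjective _ (map_of_le_surjective h)

theorem card_quotient_lt_of_le (h : r ≤ s) {x y : α} (hs : s x y) (hr : ¬r x y) :
    Nat.card (Quotient s) < Nat.card (Quotient r) := by
  refine (card_quotient_le_of_le h).lt_of_ne fun hcard => hr (Quotient.exact ?_)
  have hbij := (Nat.bijective_iff_surjective_and_card (map_of_le h)).2
    ⟨map_of_le_surjective h, hcard.symm⟩
  exact hbij.1 (Quotient.sound hs)

end Setoid

namespace Equiv.Perm

section SameCycleSetoid

variable {α : Type*}

theorem sameCycle_setoid_le_iff {σ : Perm α} {t : Setoid α} :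
    SameCycle.setoid σ ≤ t ↔ ∀ u, t u (σ u) := by
  refine ⟨fun h u => h (sameCycle_apply_right.2 (SameCycle.refl σ u)), fun h u _ => ?_⟩
  rintro ⟨i, rfl⟩
  induction i using Int.induction_on with
  | zero => exact t.refl u
  | succ i ih =>
    rw [add_comm, zpow_one_add, mul_apply]
    exact t.trans ih (h _)
  | pred i ih =>
    rw [← sub_add_cancel (-(i : ℤ)) 1, add_comm, zpow_one_add, mul_apply] at ih
    exact t.trans ih (t.symm (h _))

theorem sameCycle_setoid_mul_le (f g : Perm α) :
    SameCycle.setoid (f * g) ≤ SameCycle.setoid f ⊔ SameCycle.setoid g :=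
  sameCycle_setoid_le_iff.2 fun u =>
    (SameCycle.setoid f ⊔ SameCycle.setoid g).trans
      (le_sup_right (a := SameCycle.setoid f) (sameCycle_apply_right.2 (SameCycle.refl g u)))
      (le_sup_left (b := SameCycle.setoid g) (sameCycle_apply_right.2 (SameCycle.refl f (g u))))

theorem sameCycle_setoid_le_of_mem_closure {S : Set (Perm α)} {t : Setoid α}
    (hS : ∀ f ∈ S, SameCycle.setoid f ≤ t) {g : Perm α} (hg : g ∈ Subgroup.closure S) :
    SameCycle.setoid g ≤ t := by
  induction hg using Subgroup.closure_induction with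
  | mem f hf => exact hS f hf
  | one => exact fun u v h => sameCycle_one.1 h ▸ t.refl u
  | mul f g _ _ hf hg => exact (sameCycle_setoid_mul_le f g).trans (sup_le hf hg)
  | inv f _ hf => exact fun u v h => hf (sameCycle_inv.1 h)

theorem card_quotient_sup_le_one [Finite α] {σ τ : Perm α}
    (htrans : ∀ x y : α, ∃ g ∈ Subgroup.closure {σ, τ}, g x = y) :
    Nat.card (Quotient (SameCycle.setoid σ ⊔ SameCycle.setoid τ)) ≤ 1 := by
  refine Finite.card_le_one_iff_subsingleton.2 ⟨Quotient.ind₂ fun x y => Quotient.sound ?_⟩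
  obtain ⟨g, hg, rfl⟩ := htrans x y
  refine sameCycle_setoid_le_of_mem_closure ?_ hg (sameCycle_apply_right.2 (SameCycle.refl g x))
  rintro f (rfl | rfl)
  exacts [le_sup_left, le_sup_right]

variable [DecidableEq α]

theorem sameCycle_swap (x y : α) : (swap x y).SameCycle x y :=
  ⟨1, by simp⟩

theorem sameCycle_setoid_swap_le_iff {x y : α} {t : Setoid α} :
    SameCycle.setoid (swap x y) ≤ t ↔ t x y := by
  refine ⟨fun h => h (sameCycle_swap x y), fun h => sameCycle_setoid_le_iff.2 ?_⟩
  intro u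
  rcases eq_or_ne u x with rfl | hx
  · simpa using h
  rcases eq_or_ne u y with rfl | hy
  · simpa using t.symm h
  · rw [swap_apply_of_ne_of_ne hx hy]

theorem sup_sameCycle_setoid_swap_mul (σ : Perm α) (x y : α) :
    SameCycle.setoid (swap x y * σ) ⊔ SameCycle.setoid (swap x y) =
      SameCycle.setoid σ ⊔ SameCycle.setoid (swap x y) := by
  have key : ∀ τ : Perm α, SameCycle.setoid (swap x y * τ) ⊔ SameCycle.setoid (swap x y) ≤
      SameCycle.setoid τ ⊔ SameCycle.setoid (swap x y) := fun τ =>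
    sup_le ((sameCycle_setoid_mul_le _ _).trans_eq (sup_comm _ _)) le_sup_right
  refine le_antisymm (key σ) ?_
  simpa only [swap_mul_self_mul] using key (swap x y * σ)

variable [Finite α]

theorem card_quotient_le_card_quotient_sup_swap_add_one (r : Setoid α) (x y : α) :
    Nat.card (Quotient r) ≤ Nat.card (Quotient (r ⊔ SameCycle.setoid (swap x y))) + 1 := by
  classical
  set s := r ⊔ SameCycle.setoid (swap x y)
  -- `s` only glues the classes of `x` and `y` together
  have hs : s ≤ Setoid.ker fun u => if r u x ∨ r u y then none else some (Quotient.mk r u) := by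
    refine sup_le (fun u v huv => ?_) (sameCycle_setoid_swap_le_iff.2 ?_)
    · have hx : r u x ↔ r v x := ⟨r.trans (r.symm huv), r.trans huv⟩
      have hy : r u y ↔ r v y := ⟨r.trans (r.symm huv), r.trans huv⟩
      simp only [Setoid.ker_def, hx, hy, Quotient.sound huv]
    · simp [Setoid.ker_def]
  let g : Quotient r → Option (Quotient s) := Quotient.lift
    (fun u => if r u y then none else some (Quotient.mk s u))
    (fun u v huv => by
      have hy : r u y ↔ r v y := ⟨r.trans (r.symm huv), r.trans huv⟩
      have huv' : Quotient.mk s u = Quotient.mk s v := Quotient.sound ((le_sup_left : r ≤ s) huv)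
      simp only [hy, huv'])
  have hg : Injective g := by
    refine Quotient.ind₂ fun u v huv => Quotient.sound ?_
    simp only [g, Quotient.lift_mk] at huv
    by_cases hu : r u y <;> by_cases hv : r v y <;> simp only [hu, hv, if_true, if_false,
      reduceCtorEq, Option.some.injEq] at huv
    · exact r.trans hu (r.symm hv)
    have hker := Setoid.ker_def.1 (hs (Quotient.exact huv))
    by_cases hux : r u x
    · by_cases hvx : r v x
      · exact r.trans hux (r.symm hvx)
      · simp [hux, hvx, hv] at hker
    · by_cases hvx : r v x <;> simp [hux, hvx, hu, hv] at hker
      exact Quotient.exact hker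
  simpa [Finite.card_option] using Nat.card_le_card_of_injective g hg

theorem card_quotient_sup_swap_add_one {r : Setoid α} {x y : α} (h : ¬r x y) :
    Nat.card (Quotient (r ⊔ SameCycle.setoid (swap x y))) + 1 = Nat.card (Quotient r) :=
  le_antisymm (Setoid.card_quotient_lt_of_le le_sup_left
    (le_sup_right (a := r) (sameCycle_swap x y)) h)
    (card_quotient_le_card_quotient_sup_swap_add_one r x y)

end SameCycleSetoid

variable {X : Type*} [Fintype X] [DecidableEq X]

def cycleOrFixedPoint (σ : Perm X) (x : X) : fixedPoints σ ⊕ σ.cycleFactorsFinset :=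
  if hx : σ x = x then .inl ⟨x, hx⟩
  else .inr ⟨σ.cycleOf x, cycleOf_mem_cycleFactorsFinset_iff.2 (mem_support.2 hx)⟩

theorem cycleOrFixedPoint_eq_iff {σ : Perm X} {x y : X} :
    σ.cycleOrFixedPoint x = σ.cycleOrFixedPoint y ↔ σ.SameCycle x y := by
  by_cases hx : σ x = x <;> by_cases hy : σ y = y <;>
    simp only [cycleOrFixedPoint, hx, hy, dif_pos, dif_neg, not_false_eq_true, reduceCtorEq,
      Sum.inl.injEq, Sum.inr.injEq, Subtype.mk.injEq, false_iff]
  · exact ⟨fun h => by cases h; rfl, fun h => Subtype.ext (h.eq_of_left hx)⟩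
  · exact fun h => hy (h.apply_eq_self_iff.1 hx)
  · exact fun h => hx (h.apply_eq_self_iff.2 hy)
  · exact (sameCycle_iff_cycleOf_eq_of_mem_support (mem_support.2 hx) (mem_support.2 hy)).symm

theorem cycleOrFixedPoint_surjective (σ : Perm X) : Surjective σ.cycleOrFixedPoint := by
  rintro (⟨x, hx⟩ | ⟨c, hc⟩)
  · exact ⟨x, by simp [cycleOrFixedPoint, hx.eq]⟩
  · obtain ⟨x, hx⟩ := (mem_cycleFactorsFinset_iff.1 hc).1.nonempty_support
    have hσx : σ x ≠ x := mem_support.1 (mem_cycleFactorsFinset_support_le hc hx)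
    exact ⟨x, by simp [cycleOrFixedPoint, hσx, ← cycle_is_cycleOf hx hc]⟩

theorem card_quotient_sameCycle (σ : Perm X) :
    Nat.card (Quotient (SameCycle.setoid σ)) = cycleCount σ := by
  have hker : SameCycle.setoid σ = Setoid.ker σ.cycleOrFixedPoint :=
    Setoid.ext fun _ _ => cycleOrFixedPoint_eq_iff.symm
  rw [hker, Nat.card_congr (Setoid.quotientKerEquivOfSurjective _ σ.cycleOrFixedPoint_surjective),
    Nat.card_sum, Nat.card_eq_fintype_card, card_fixedPoints, cycleCount, cycleType_def,
    Multiset.card_map, Nat.card_eq_fintype_card, Fintype.card_coe]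
  rfl

theorem cycleCount_one : cycleCount (1 : Perm X) = Fintype.card X := by
  simp [cycleCount]

theorem cycleCount_inv (σ : Perm X) : cycleCount σ⁻¹ = cycleCount σ := by
  simp only [cycleCount, cycleType_inv]

theorem sign_eq_neg_one_pow_card_add_cycleCount (σ : Perm X) :
    sign σ = (-1) ^ (Fintype.card X + cycleCount σ) := by
  obtain ⟨f, hf⟩ : ∃ f, Fintype.card X = f + σ.cycleType.sum :=
    ⟨_, (Nat.sub_add_cancel σ.sum_cycleType_le).symm⟩
  rw [sign_of_cycleType, cycleCount, hf, Nat.add_sub_cancel,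
    show f + σ.cycleType.sum + (f + σ.cycleType.card) =
      σ.cycleType.sum + σ.cycleType.card + 2 * f by ring, pow_add _ _ (2 * f), pow_mul]
  simp

theorem cycleCount_swap_mul_ne (σ : Perm X) {x y : X} (hxy : x ≠ y) :
    cycleCount (swap x y * σ) ≠ cycleCount σ := by
  intro h
  have hsign : sign (swap x y * σ) = -sign σ := by rw [sign_mul, sign_swap hxy, neg_one_mul]
  rw [sign_eq_neg_one_pow_card_add_cycleCount, sign_eq_neg_one_pow_card_add_cycleCount, h]
    at hsign
  exact units_ne_neg_self _ hsign

theorem sameCycle_swap_mul_iff (σ : Perm X) {x y : X} (hxy : x ≠ y) :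
    (swap x y * σ).SameCycle x y ↔ ¬σ.SameCycle x y := by
  have hne := cycleCount_swap_mul_ne σ hxy
  have hsup := sup_sameCycle_setoid_swap_mul σ x y
  rw [← card_quotient_sameCycle, ← card_quotient_sameCycle] at hne
  refine ⟨fun h hσ => hne ?_, fun hσ => by_contra fun h => hne ?_⟩
  · rw [← sup_eq_left.2 (sameCycle_setoid_swap_le_iff (t := SameCycle.setoid _).2 h),
      ← sup_eq_left.2 (sameCycle_setoid_swap_le_iff (t := SameCycle.setoid σ).2 hσ), hsup]
  · rw [← card_quotient_sup_swap_add_one (r := SameCycle.setoid _) h,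
      ← card_quotient_sup_swap_add_one (r := SameCycle.setoid σ) hσ, hsup]

theorem cycleCount_swap_mul_of_not_sameCycle {σ : Perm X} {x y : X} (h : ¬σ.SameCycle x y) :
    cycleCount (swap x y * σ) + 1 = cycleCount σ := by
  have hxy : x ≠ y := by rintro rfl; exact h (SameCycle.refl σ x)
  have hjoin := (sameCycle_swap_mul_iff σ hxy).2 h
  rw [← card_quotient_sameCycle, ← card_quotient_sameCycle,
    ← card_quotient_sup_swap_add_one (r := SameCycle.setoid σ) h, ← sup_sameCycle_setoid_swap_mul,
    sup_eq_left.2 (sameCycle_setoid_swap_le_iff (t := SameCycle.setoid _).2 hjoin)]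

theorem cycleCount_swap_mul_of_sameCycle {σ : Perm X} {x y : X} (hxy : x ≠ y)
    (h : σ.SameCycle x y) : cycleCount (swap x y * σ) = cycleCount σ + 1 := by
  have hsplit := mt (sameCycle_swap_mul_iff σ hxy).1 (not_not_intro h)
  simpa only [swap_mul_self_mul] using (cycleCount_swap_mul_of_not_sameCycle hsplit).symm

theorem induction_on_swap_mul_of_not_sameCycle {motive : Perm X → Prop} (σ : Perm X)
    (one : motive 1)
    (swap_mul : ∀ σ x y, ¬σ.SameCycle x y → motive σ → motive (swap x y * σ)) : motive σ := by
  induction hσ : σ.support.card using Nat.strong_induction_on generalizing σ with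
  | _ n ih =>
    by_cases h1 : σ = 1
    · exact h1 ▸ one
    obtain ⟨b, hb⟩ : ∃ b, σ b ≠ b := not_forall.1 fun h => h1 (Equiv.ext h)
    have hfix : (swap b (σ b) * σ) b = b := by simp
    have hsplit : ¬(swap b (σ b) * σ).SameCycle b (σ b) := fun h => hb (h.eq_of_left hfix).symm
    rw [← swap_mul_self_mul b (σ b) σ]
    exact swap_mul _ _ _ hsplit (ih _ (hσ ▸ card_support_swap_mul hb) _ rfl)

theorem cycleCount_add_cycleCount_add_cycleCount_mul_le (α β : Perm X) :
    cycleCount α + cycleCount β + cycleCount (α * β) ≤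
      Fintype.card X + 2 * Nat.card (Quotient (SameCycle.setoid α ⊔ SameCycle.setoid β)) := by
  induction β using induction_on_swap_mul_of_not_sameCycle with
  | one =>
    have h1 : SameCycle.setoid (1 : Perm X) ≤ SameCycle.setoid α :=
      fun u v h => sameCycle_one.1 h ▸ SameCycle.refl α u
    rw [sup_eq_left.2 h1, card_quotient_sameCycle, mul_one, cycleCount_one]
    omega
  | swap_mul β x y hxy ih =>
    set R := SameCycle.setoid α ⊔ SameCycle.setoid β
    have hne : x ≠ y := by rintro rfl; exact hxy (SameCycle.refl β x)
    have hβ := cycleCount_swap_mul_of_not_sameCycle hxy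
    have hjoin := (sameCycle_swap_mul_iff β hne).2 hxy
    have hR : SameCycle.setoid α ⊔ SameCycle.setoid (swap x y * β) =
        R ⊔ SameCycle.setoid (swap x y) := by
      rw [sup_assoc, ← sup_sameCycle_setoid_swap_mul β x y,
        sup_eq_left.2 (sameCycle_setoid_swap_le_iff (t := SameCycle.setoid _).2 hjoin)]
    have hconj : α * (swap x y * β) = swap (α x) (α y) * (α * β) := by
      rw [swap_apply_apply]; group
    rw [hR, hconj]
    by_cases hRxy : R x y
    · rw [sup_eq_left.2 (sameCycle_setoid_swap_le_iff.2 hRxy)]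
      have : cycleCount (swap (α x) (α y) * (α * β)) ≤ cycleCount (α * β) + 1 := by
        by_cases h : (α * β).SameCycle (α x) (α y)
        · rw [cycleCount_swap_mul_of_sameCycle (α.injective.ne hne) h]
        · rw [← cycleCount_swap_mul_of_not_sameCycle h]; omega
      omega
    · have hk := card_quotient_sup_swap_add_one hRxy
      have hRα : ∀ u, R u (α u) :=
        fun u => (le_sup_left : _ ≤ R) (sameCycle_apply_right.2 (SameCycle.refl α u))
      have hsplit : ¬(α * β).SameCycle (α x) (α y) := fun h =>
        hRxy (R.trans (hRα x) (R.trans (sameCycle_setoid_mul_le α β h) (R.symm (hRα y))))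
      have := cycleCount_swap_mul_of_not_sameCycle hsplit
      omega

end Equiv.Perm

/-- If ⟨α, β⟩ is transitive on m points and sign(α)·sign(β)·sign((αβ)⁻¹) = 1
(which always holds), then m + 2 − (|α| + |β| + |(αβ)⁻¹|) is a nonnegative
even integer (twice the genus of the associated connected branched cover). -/
theorem twice_genus_nonneg_even {X : Type*} [Fintype X] [DecidableEq X]
    (m : ℕ) (hm : Fintype.card X = m) (α β : Equiv.Perm X)
    (htrans : ∀ x y : X, ∃ g ∈ Subgroup.closure {α, β}, g x = y)
    (hsign : Equiv.Perm.sign α * Equiv.Perm.sign β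
      * Equiv.Perm.sign ((α * β)⁻¹) = 1) :
    0 ≤ (m : ℤ) + 2 - (cycleCount α + cycleCount β + cycleCount ((α * β)⁻¹)) ∧
    Even ((m : ℤ) + 2
      - (cycleCount α + cycleCount β + cycleCount ((α * β)⁻¹))) := by
  subst hm
  have horbits := card_quotient_sup_le_one htrans
  have hRH := cycleCount_add_cycleCount_add_cycleCount_mul_le α β
  rw [sign_inv, sign_eq_neg_one_pow_card_add_cycleCount, sign_eq_neg_one_pow_card_add_cycleCount,
    sign_eq_neg_one_pow_card_add_cycleCount, ← pow_add, ← pow_add,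
    neg_one_pow_eq_one_iff_even (by decide)] at hsign
  obtain ⟨k, hk⟩ := hsign
  rw [cycleCount_inv]
  exact ⟨by omega, ⟨k - Fintype.card X - (cycleCount α + cycleCount β + cycleCount (α * β)) + 1,
    by omega⟩⟩
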